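/- arXiv:0901.2655 — 9 statements merged into one kernel-verified Lean document; each statement's English description precedes it below -/
import Mathlib

section
/- Let α and β be real numbers and let n be a nonnegative integer. For every real x > 1, the n-th derivative of the function f(x) = x^{-α}·(ln x)^{β} (real powers) satisfies f^{(n)}(x) = x^{-α-n} · Σ_{i=0}^{n} s(n,i,α)·(β)_i·(ln x)^{β-i}. -/
/-- Non-central Stirling numbers of the first kind `s(n, k, α)`. -/
noncomputable def ncStirling : ℕ → ℕ → ℝ → ℝ
  | 0, 0, _ => 1
  | 0, _ + 1, _ => 0
  | n + 1, 0, α => (-α - n) * ncStirling n 0 α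
  | n + 1, k + 1, α => ncStirling n k α + (-α - n) * ncStirling n (k + 1) α

/-- Falling factorial `(β)_i = β (β-1) ⋯ (β-i+1)`, with `(β)_0 = 1`. -/
noncomputable def fall (β : ℝ) (i : ℕ) : ℝ := ∏ j ∈ Finset.range i, (β - j)

/-! The `n`-th derivative has the shape `x ^ (-α - n) * S n (log x)` with
`S n L = ∑ i ≤ n, s(n,i,α) (β)_i L ^ (β - i)`. Differentiating once more gives
`x ^ (-α - n - 1) * ((-α - n) * S n L + (S n)' L)`, and since `(β)_i (β - i) = (β)_(i+1)`,
the bracket is `S (n + 1) L` by the Stirling recurrence. -/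

open Finset Real

theorem ncStirling_eq_zero_of_lt (α : ℝ) : ∀ {n k : ℕ}, n < k → ncStirling n k α = 0
  | 0, _ + 1, _ => rfl
  | n + 1, k + 1, h => by
    rw [ncStirling, ncStirling_eq_zero_of_lt α (by omega), ncStirling_eq_zero_of_lt α (by omega)]
    ring

theorem fall_succ (β : ℝ) (i : ℕ) : fall β (i + 1) = fall β i * (β - i) :=
  prod_range_succ _ _

noncomputable def stirlingLogSum (α β : ℝ) (n : ℕ) (L : ℝ) : ℝ :=
  ∑ i ∈ range (n + 1), ncStirling n i α * fall β i * L ^ (β - i)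

theorem stirlingLogSum_eq_sum_range_add_two (α β : ℝ) (n : ℕ) (L : ℝ) :
    stirlingLogSum α β n L =
      ∑ i ∈ range (n + 2), ncStirling n i α * fall β i * L ^ (β - i) := by
  rw [sum_range_succ _ (n + 1), ncStirling_eq_zero_of_lt α (Nat.lt_succ_self n), zero_mul,
    zero_mul, add_zero, stirlingLogSum]

theorem stirlingLogSum_succ (α β : ℝ) (n : ℕ) (L : ℝ) :
    stirlingLogSum α β (n + 1) L =
      (-α - n) * stirlingLogSum α β n L +
        ∑ i ∈ range (n + 1), ncStirling n i α * fall β (i + 1) * L ^ (β - (i + 1 : ℕ)) := by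
  rw [stirlingLogSum_eq_sum_range_add_two α β n, stirlingLogSum, sum_range_succ',
    sum_range_succ' _ (n + 1), mul_add, mul_sum]
  simp only [ncStirling, add_mul, sum_add_distrib, mul_assoc]
  ring

theorem hasDerivAt_stirlingLogSum (α β : ℝ) (n : ℕ) {L : ℝ} (hL : 0 < L) :
    HasDerivAt (stirlingLogSum α β n)
      (∑ i ∈ range (n + 1), ncStirling n i α * fall β (i + 1) * L ^ (β - (i + 1 : ℕ))) L := by
  refine HasDerivAt.fun_sum fun i _ => ?_
  refine ((hasDerivAt_rpow_const (p := β - i) (Or.inl hL.ne')).const_mul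
    (ncStirling n i α * fall β i)).congr_deriv ?_
  rw [fall_succ, Nat.cast_succ, ← sub_sub]; ring

theorem hasDerivAt_rpow_mul_stirlingLogSum_log (α β : ℝ) (n : ℕ) {x : ℝ} (hx : 1 < x) :
    HasDerivAt (fun y => y ^ (-α - n) * stirlingLogSum α β n (log y))
      (x ^ (-α - (n + 1 : ℕ)) * stirlingLogSum α β (n + 1) (log x)) x := by
  have hx0 : 0 < x := by linarith
  have hpow := hasDerivAt_rpow_const (p := -α - n) (Or.inl hx0.ne')
  have hsum := (hasDerivAt_stirlingLogSum α β n (log_pos hx)).comp x (hasDerivAt_log hx0.ne')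
  refine (hpow.mul hsum).congr_deriv ?_
  rw [stirlingLogSum_succ, Nat.cast_succ, ← sub_sub, rpow_sub_one hx0.ne', Function.comp_apply]
  ring

theorem deriv_rpow_mul_log_rpow (α β : ℝ) (n : ℕ) :
    ∀ x : ℝ, 1 < x →
      iteratedDeriv n (fun y : ℝ => y ^ (-α) * Real.log y ^ β) x =
        x ^ (-α - n) * ∑ i ∈ Finset.range (n + 1),
          ncStirling n i α * fall β i * Real.log x ^ (β - i) := by
  induction n with
  | zero =>
    intro x _
    simp [ncStirling, fall]
  | succ n ih =>
    intro x hx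
    have hfun : iteratedDeriv n (fun y : ℝ => y ^ (-α) * log y ^ β) =ᶠ[nhds x]
        fun y => y ^ (-α - n) * stirlingLogSum α β n (log y) :=
      (eventually_gt_nhds hx).mono ih
    rw [iteratedDeriv_succ, hfun.deriv_eq,
      (hasDerivAt_rpow_mul_stirlingLogSum_log α β n hx).deriv, stirlingLogSum]
end

section
/- Let f : ℝ → ℝ be a smooth (infinitely differentiable) function and let n be a positive integer. Then for every real x > 0, the n-th derivative of the function x ↦ f(ln x) satisfies (f ∘ ln)^{(n)}(x) = x^{-n} · Σ_{k=1}^{n} s(n,k)·f^{(k)}(ln x). -/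
/-- Signed Stirling numbers of the first kind `s(n, k)`. -/
def stirling1 : ℕ → ℕ → ℤ
  | 0, 0 => 1
  | 0, _ + 1 => 0
  | n + 1, 0 => -(n : ℤ) * stirling1 n 0
  | n + 1, k + 1 => stirling1 n k - (n : ℤ) * stirling1 n (k + 1)

lemma stirling1_zero_right : ∀ n : ℕ, 0 < n → stirling1 n 0 = 0 := by
  intro n hn
  induction n with
  | zero => omega
  | succ m ih =>
    rcases Nat.eq_zero_or_pos m with h | h
    · subst h; simp [stirling1]
    · show -(m : ℤ) * stirling1 m 0 = 0
      rw [ih h, mul_zero]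

lemma stirling1_eq_zero_of_lt : ∀ n k : ℕ, n < k → stirling1 n k = 0 := by
  intro n
  induction n with
  | zero => intro k hk; cases k with
    | zero => omega
    | succ j => simp [stirling1]
  | succ m ih =>
    intro k hk
    cases k with
    | zero => omega
    | succ j =>
      show stirling1 m j - (m : ℤ) * stirling1 m (j + 1) = 0
      rw [ih j (by omega), ih (j+1) (by omega)]; ring

lemma sum_Icc_one_eq (m : ℕ) (F : ℕ → ℝ) :
    ∑ k ∈ Finset.Icc 1 m, F k = ∑ i ∈ Finset.range m, F (i + 1) := by
  rw [← Finset.Ico_add_one_right_eq_Icc, Finset.sum_Ico_eq_sum_range]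
  simp [Nat.add_comm]

lemma stirling1_sum_identity (n : ℕ) (hn : 0 < n) (g : ℕ → ℝ) :
    ∑ k ∈ Finset.Icc 1 (n+1), (stirling1 (n+1) k : ℝ) * g k
      = ∑ k ∈ Finset.Icc 1 n, (stirling1 n k : ℝ) * g (k+1)
        - (n : ℝ) * ∑ k ∈ Finset.Icc 1 n, (stirling1 n k : ℝ) * g k := by
  rw [sum_Icc_one_eq, sum_Icc_one_eq, sum_Icc_one_eq]
  have hs : ∀ i : ℕ, (stirling1 (n+1) (i + 1) : ℝ)
      = (stirling1 n i : ℝ) - (n : ℝ) * (stirling1 n (i + 1) : ℝ) := by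
    intro i
    show ((stirling1 n i - (n : ℤ) * stirling1 n (i + 1) : ℤ) : ℝ) = _
    push_cast; ring
  have expand : ∑ i ∈ Finset.range (n+1), (stirling1 (n+1) (i + 1) : ℝ) * g (i + 1)
      = ∑ i ∈ Finset.range (n+1), (stirling1 n i : ℝ) * g (i + 1)
        - (n : ℝ) * ∑ i ∈ Finset.range (n+1), (stirling1 n (i+1) : ℝ) * g (i + 1) := by
    rw [Finset.mul_sum, ← Finset.sum_sub_distrib]
    refine Finset.sum_congr rfl fun i _ => ?_
    rw [hs]; ring
  rw [expand]
  congr 1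
  · rw [Finset.sum_range_succ']
    have h0 : (stirling1 n 0 : ℝ) = 0 := by rw [stirling1_zero_right n hn]; norm_num
    rw [h0, zero_mul, add_zero]
  · congr 1
    rw [Finset.sum_range_succ]
    have h0 : (stirling1 n (n+1) : ℝ) = 0 := by
      rw [stirling1_eq_zero_of_lt n (n+1) (by omega)]; norm_num
    rw [h0, zero_mul, add_zero]

theorem iteratedDeriv_comp_log (f : ℝ → ℝ) (hf : ContDiff ℝ (⊤ : ℕ∞) f) (n : ℕ) (hn : 0 < n) :
    ∀ x : ℝ, 0 < x →
      iteratedDeriv n (fun y : ℝ => f (Real.log y)) x =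
        x ^ (-(n : ℤ)) * ∑ k ∈ Finset.Icc 1 n,
          (stirling1 n k : ℝ) * iteratedDeriv k f (Real.log x) := by
  set F : ℕ → ℝ → ℝ := fun m x => x ^ (-(m : ℤ)) * ∑ k ∈ Finset.Icc 1 m,
    (stirling1 m k : ℝ) * iteratedDeriv k f (Real.log x) with hF
  have hdiff : ∀ k : ℕ, Differentiable ℝ (iteratedDeriv k f) := by
    intro k
    exact hf.differentiable_iteratedDeriv k (by exact_mod_cast ENat.natCast_lt_top k)
  have hDk : ∀ (k : ℕ) (x : ℝ), 0 < x →
      HasDerivAt (fun y => iteratedDeriv k f (Real.log y))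
        (iteratedDeriv (k+1) f (Real.log x) * x⁻¹) x := by
    intro k x hx
    have h1 : HasDerivAt (iteratedDeriv k f) (iteratedDeriv (k+1) f (Real.log x)) (Real.log x) := by
      rw [iteratedDeriv_succ]
      exact ((hdiff k) (Real.log x)).hasDerivAt
    exact h1.comp x (Real.hasDerivAt_log hx.ne')
  have step : ∀ m : ℕ, 0 < m → ∀ x : ℝ, 0 < x → HasDerivAt (F m) (F (m+1) x) x := by
    intro m hm x hx
    have hpow := hasDerivAt_zpow (-(m : ℤ)) x (Or.inl hx.ne')
    have hsum : HasDerivAt (fun y => ∑ k ∈ Finset.Icc 1 m,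
        (stirling1 m k : ℝ) * iteratedDeriv k f (Real.log y))
        (∑ k ∈ Finset.Icc 1 m,
          (stirling1 m k : ℝ) * (iteratedDeriv (k+1) f (Real.log x) * x⁻¹)) x := by
      apply HasDerivAt.fun_sum
      intro k _
      exact (hDk k x hx).const_mul _
    have hmul := hpow.mul hsum
    refine hmul.congr_deriv ?_
    symm
    rw [hF]
    simp only
    rw [stirling1_sum_identity m hm (fun k => iteratedDeriv k f (Real.log x))]
    have hx0 : x ≠ 0 := hx.ne'
    set S0 := ∑ k ∈ Finset.Icc 1 m, (stirling1 m k : ℝ) * iteratedDeriv k f (Real.log x) with hS0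
    set S1 := ∑ k ∈ Finset.Icc 1 m, (stirling1 m k : ℝ) * iteratedDeriv (k+1) f (Real.log x) with hS1
    have e3 : ∑ k ∈ Finset.Icc 1 m, (stirling1 m k : ℝ) * (iteratedDeriv (k+1) f (Real.log x) * x⁻¹)
        = S1 * x⁻¹ := by
      rw [hS1, Finset.sum_mul]
      exact Finset.sum_congr rfl fun k _ => by ring
    rw [e3]
    have e1 : x ^ (-((m : ℕ) + 1 : ℕ) : ℤ) = x ^ (-(m : ℤ) - 1) := by
      congr 1; push_cast; ring
    have e2 : x ^ (-(m : ℤ)) * x⁻¹ = x ^ (-(m : ℤ) - 1) := by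
      rw [← zpow_neg_one x, ← zpow_add₀ hx0, sub_eq_add_neg]
    rw [e1, show x ^ (-(m : ℤ)) * (S1 * x⁻¹) = x ^ (-(m : ℤ)) * x⁻¹ * S1 by ring, e2]
    push_cast
    ring
  show ∀ x : ℝ, 0 < x → iteratedDeriv n (fun y : ℝ => f (Real.log y)) x = F n x
  induction n, hn using Nat.le_induction with
  | base =>
    intro x hx
    rw [iteratedDeriv_one]
    have hg : HasDerivAt (fun y : ℝ => f (Real.log y)) (deriv f (Real.log x) * x⁻¹) x := by
      have h1 : HasDerivAt f (deriv f (Real.log x)) (Real.log x) :=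
        ((hf.differentiable (by simp)) (Real.log x)).hasDerivAt
      exact h1.comp x (Real.hasDerivAt_log hx.ne')
    rw [hg.deriv, hF]
    simp [stirling1, iteratedDeriv_one, zpow_neg, mul_comm]
  | succ m hm ih =>
    intro x hx
    rw [iteratedDeriv_succ]
    have hev : iteratedDeriv m (fun y : ℝ => f (Real.log y)) =ᶠ[nhds x] F m := by
      filter_upwards [isOpen_Ioi.mem_nhds (Set.mem_Ioi.mpr hx)] with y hy
      exact ih y hy
    rw [hev.deriv_eq, (step m hm x hx).deriv]
end

section
/- Let α be a real number and let n be a positive integer. Then s(n,1,α) = n! · Σ_{k=0}^{n-1} (-1)^{n-k-1} · ((-α)_k / k!) / (n-k). -/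
/-!
The exponential generating function of `s(n, 1, α)` is `F = (1 + X)^(-α) log (1 + X)`.
Since `(1 + X) ((1 + X)^β)' = β (1 + X)^β` and `(1 + X) (log (1 + X))' = 1`, it satisfies
`(1 + X) F' = -α F + (1 + X)^(-α)`, whose coefficient form is the recurrence
`s(n + 1, 1, α) = (-α)_n + (-α - n) s(n, 1, α)`; as `s(0, 1, α) = 0` is the constant term of `F`,
`s(n, 1, α) / n!` is the `n`-th coefficient of `F`, which is the stated Cauchy product.
-/

open Finset PowerSeries

lemma descPochhammer_smeval_eq_fall (β : ℝ) (k : ℕ) :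
    (descPochhammer ℤ k).smeval β = fall β k := by
  rw [← Polynomial.aeval_eq_smeval, Polynomial.aeval_def, ← Polynomial.eval_map,
    descPochhammer_map, descPochhammer_eval_eq_prod_range, fall]

lemma coeff_binomialSeries_eq_fall_div_factorial (β : ℝ) (k : ℕ) :
    coeff k (PowerSeries.binomialSeries ℝ β) = fall β k / k.factorial := by
  rw [binomialSeries_coeff, smul_eq_mul, mul_one, Ring.choose_eq_smul,
    descPochhammer_smeval_eq_fall, smul_eq_mul, inv_mul_eq_div]

lemma succ_mul_fall_div_factorial_succ (β : ℝ) (k : ℕ) :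
    ((k : ℝ) + 1) * (fall β (k + 1) / (k + 1).factorial) = (β - k) * (fall β k / k.factorial) := by
  rw [fall, prod_range_succ, ← fall, Nat.factorial_succ]
  push_cast
  field_simp

lemma coeff_one_add_X_mul_derivative {R : Type*} [CommSemiring R] (f : R⟦X⟧) (n : ℕ) :
    coeff n ((1 + X) * d⁄dX R f) = (n + 1) * coeff (n + 1) f + n * coeff n f := by
  rw [add_mul, one_mul, map_add, coeff_derivative]
  cases n with
  | zero => simp
  | succ n => rw [coeff_succ_X_mul, coeff_derivative]; push_cast; ring

lemma one_add_X_mul_derivative_binomialSeries (β : ℝ) :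
    (1 + X) * d⁄dX ℝ (PowerSeries.binomialSeries ℝ β) = C β * PowerSeries.binomialSeries ℝ β := by
  ext n
  rw [coeff_one_add_X_mul_derivative, coeff_C_mul, coeff_binomialSeries_eq_fall_div_factorial,
    coeff_binomialSeries_eq_fall_div_factorial, succ_mul_fall_div_factorial_succ]
  ring

lemma one_add_X_mul_derivative_log (A : Type*) [CommRing A] [Algebra ℚ A] :
    (1 + X) * d⁄dX A (log A) = 1 := by
  ext n
  rw [coeff_one_add_X_mul_derivative, coeff_log, coeff_log, coeff_one]
  rcases n with _ | n
  · simp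
  · rw [if_neg n.succ_ne_zero, if_neg (n + 1).succ_ne_zero, if_neg n.succ_ne_zero]
    have h : ((n + 1 : ℕ) + 1 : ℚ) * ((-1) ^ (n + 1 + 1 + 1) / ((n + 1 + 1 : ℕ) : ℚ))
        + ((n + 1 : ℕ) : ℚ) * ((-1) ^ (n + 1 + 1) / ((n + 1 : ℕ) : ℚ)) = 0 := by
      field_simp
      push_cast
      ring
    simpa using congrArg (algebraMap ℚ A) h

lemma one_add_X_mul_derivative_binomialSeries_mul_log (β : ℝ) :
    (1 + X) * d⁄dX ℝ (PowerSeries.binomialSeries ℝ β * log ℝ)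
      = C β * (PowerSeries.binomialSeries ℝ β * log ℝ) + PowerSeries.binomialSeries ℝ β := by
  rw [Derivation.leibniz, smul_eq_mul, smul_eq_mul]
  linear_combination (PowerSeries.binomialSeries ℝ β) * one_add_X_mul_derivative_log ℝ
    + log ℝ * one_add_X_mul_derivative_binomialSeries β

lemma succ_mul_coeff_succ_binomialSeries_mul_log (β : ℝ) (n : ℕ) :
    ((n : ℝ) + 1) * coeff (n + 1) (PowerSeries.binomialSeries ℝ β * log ℝ)
      = fall β n / n.factorial + (β - n) * coeff n (PowerSeries.binomialSeries ℝ β * log ℝ) := by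
  have h := congrArg (coeff n) (one_add_X_mul_derivative_binomialSeries_mul_log β)
  rw [coeff_one_add_X_mul_derivative, map_add, coeff_C_mul,
    coeff_binomialSeries_eq_fall_div_factorial] at h
  linear_combination h

lemma ncStirling_zero_eq_fall (α : ℝ) (n : ℕ) : ncStirling n 0 α = fall (-α) n := by
  induction n with
  | zero => rfl
  | succ n ih => rw [ncStirling, ih, fall, fall, prod_range_succ, mul_comm]

lemma ncStirling_one_eq_factorial_mul_coeff (α : ℝ) (n : ℕ) :
    ncStirling n 1 α = n.factorial * coeff n (PowerSeries.binomialSeries ℝ (-α) * log ℝ) := by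
  induction n with
  | zero => simp [ncStirling]
  | succ n ih =>
    rw [ncStirling, ncStirling_zero_eq_fall, ih, Nat.factorial_succ, Nat.cast_mul, mul_assoc,
      Nat.cast_succ, mul_left_comm ((n : ℝ) + 1), succ_mul_coeff_succ_binomialSeries_mul_log]
    field_simp

lemma coeff_binomialSeries_mul_log (β : ℝ) (n : ℕ) :
    coeff n (PowerSeries.binomialSeries ℝ β * log ℝ)
      = ∑ k ∈ range n, (-1 : ℝ) ^ (n - k - 1) * (fall β k / k.factorial) / ((n : ℝ) - k) := by
  rw [coeff_mul, Nat.sum_antidiagonal_eq_sum_range_succ_mk, sum_range_succ]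
  simp only [Nat.sub_self, coeff_log, if_true, mul_zero, add_zero]
  refine sum_congr rfl fun k hk => ?_
  have hkn : k < n := mem_range.1 hk
  rw [coeff_binomialSeries_eq_fall_div_factorial, if_neg (by omega), map_div₀, map_pow, map_neg,
    map_one, map_natCast, Nat.cast_sub hkn.le, show n - k + 1 = n - k - 1 + 2 by omega, pow_add]
  ring

theorem ncStirling_one_formula_general (α : ℝ) (n : ℕ) :
    ncStirling n 1 α = (n.factorial : ℝ) * ∑ k ∈ Finset.range n,
      (-1 : ℝ) ^ (n - k - 1) * (fall (-α) k / k.factorial) / ((n : ℝ) - k) := by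
  rw [ncStirling_one_eq_factorial_mul_coeff, coeff_binomialSeries_mul_log]

theorem ncStirling_one_formula (α : ℝ) (n : ℕ) (hn : 0 < n) :
    ncStirling n 1 α = (n.factorial : ℝ) * ∑ k ∈ Finset.range n,
      (-1 : ℝ) ^ (n - k - 1) * (fall (-α) k / k.factorial) / ((n : ℝ) - k) :=
  ncStirling_one_formula_general α n
end

section
/- Let α be a real number and let n be a positive integer. Then s(n,1,α) = Σ_{k=0}^{n-1} (k+1)·s(n,k+1)·(-α)^k. -/
/-!
The recurrences say that `s(n, ·)` and `s(n, ·, α)` are the coefficient sequences of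
`x (x - 1) ⋯ (x - n + 1)` and of `(x - α) (x - α - 1) ⋯ (x - α - n + 1)`; the second polynomial
is the first one Taylor-shifted by `-α`. So `s(n, 1, α)` is the linear Taylor coefficient of the
first polynomial at `-α`, i.e. the value of its derivative there.
-/

open Polynomial Finset

theorem coeff_prod_X_sub_C_eq_of_recurrence {R : Type*} [CommRing R] (a : ℕ → R)
    (c : ℕ → ℕ → R) (zero_zero : c 0 0 = 1) (zero_succ : ∀ k, c 0 (k + 1) = 0)
    (succ_zero : ∀ n, c (n + 1) 0 = -a n * c n 0)
    (succ_succ : ∀ n k, c (n + 1) (k + 1) = c n k - a n * c n (k + 1)) (n k : ℕ) :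
    (∏ i ∈ range n, (X - C (a i))).coeff k = c n k := by
  induction n generalizing k with
  | zero => cases k <;> simp [zero_zero, zero_succ, coeff_one]
  | succ n ih =>
    cases k with
    | zero => simp [prod_range_succ, mul_coeff_zero, succ_zero, ih, mul_comm]
    | succ k => rw [prod_range_succ, coeff_mul_X_sub_C, succ_succ, ih, ih, mul_comm]

theorem natDegree_prod_range_X_sub_C_le {R : Type*} [CommRing R] (a : ℕ → R) (n : ℕ) :
    (∏ i ∈ range n, (X - C (a i))).natDegree ≤ n :=
  (natDegree_prod_le _ _).trans <| (sum_le_sum fun i _ ↦ natDegree_X_sub_C_le (a i)).trans (by simp)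

theorem derivative_eval_eq_sum_range {R : Type*} [CommSemiring R] {p : R[X]} {n : ℕ}
    (hp : p.natDegree ≤ n) (x : R) :
    p.derivative.eval x = ∑ i ∈ range n, ((i : R) + 1) * p.coeff (i + 1) * x ^ i := by
  have hdeg : p.derivative.natDegree < n + 1 := (natDegree_derivative_le p).trans_lt (by omega)
  rw [eval_eq_sum_range' hdeg, sum_range_succ, coeff_derivative,
    coeff_eq_zero_of_natDegree_lt (by omega : p.natDegree < n + 1), zero_mul, zero_mul, add_zero]
  exact sum_congr rfl fun i _ ↦ by rw [coeff_derivative]; ring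

theorem cast_stirling1_eq_coeff_prod (R : Type*) [CommRing R] (n k : ℕ) :
    (stirling1 n k : R) = (∏ i ∈ range n, (X - C (i : R))).coeff k := by
  refine (coeff_prod_X_sub_C_eq_of_recurrence _ (fun n k ↦ (stirling1 n k : R)) ?_ ?_ ?_ ?_ n k).symm
  all_goals intros; simp [stirling1]

theorem ncStirling_eq_coeff_taylor (α : ℝ) (n k : ℕ) :
    ncStirling n k α = (taylor (-α) (∏ i ∈ range n, (X - C (i : ℝ)))).coeff k := by
  have taylor_prod : taylor (-α) (∏ i ∈ range n, (X - C (i : ℝ))) =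
      ∏ i ∈ range n, (X - C (α + i)) := by
    refine (map_prod (taylorAlgHom (-α)) _ _).trans (prod_congr rfl fun i _ ↦ ?_)
    simp only [taylorAlgHom_apply, map_sub, taylor_X, taylor_C, C_add, C_neg]
    ring
  rw [taylor_prod]
  refine (coeff_prod_X_sub_C_eq_of_recurrence _ (fun n k ↦ ncStirling n k α) ?_ ?_ ?_ ?_ n k).symm
  · rfl
  · intro k; rfl
  · intro m; simp only [ncStirling]; ring
  · intro m k; simp only [ncStirling]; ring

theorem ncStirling_one_poly_general (α : ℝ) (n : ℕ) :
    ncStirling n 1 α =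
      ∑ k ∈ Finset.range n, ((k : ℝ) + 1) * (stirling1 n (k + 1) : ℝ) * (-α) ^ k := by
  rw [ncStirling_eq_coeff_taylor, taylor_coeff_one,
    derivative_eval_eq_sum_range (natDegree_prod_range_X_sub_C_le _ n)]
  simp only [cast_stirling1_eq_coeff_prod]

theorem ncStirling_one_poly (α : ℝ) (n : ℕ) (hn : 0 < n) :
    ncStirling n 1 α =
      ∑ k ∈ Finset.range n, ((k : ℝ) + 1) * (stirling1 n (k + 1) : ℝ) * (-α) ^ k :=
  ncStirling_one_poly_general α n
end

section
/- Let α be a real number and let n ≥ 1 be an integer. Then n! · Σ_{k=0}^{n-1} (-1)^k · ((-α)_k / k!) / (n-k) = Σ_{k=0}^{n-1} (k+1)·𝐬(n,k+1)·α^k, where 𝐬(n,k+1) are unsigned Stirling numbers of the first kind (with the convention 0^0 = 1 when α = 0). -/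
/-!
Both sides are the derivative in `α` of the rising factorial `α⁽ⁿ⁾ = α (α + 1) ⋯ (α + n - 1)`,
since `(-1)ᵏ (-α)_k = α⁽ᵏ⁾`. On the right this is the expansion `α⁽ⁿ⁾ = ∑ 𝐬(n, k) αᵏ`. On the left,
with `r k = α⁽ᵏ⁾ / k!` and `a n = ∑_{k<n} r k / (n - k)`, the recurrence
`(k + 1) r (k + 1) = (α + k) r k` gives `(n + 1) a (n + 1) = (α + n) a n + r n`; multiplied by
`n!` this is the product rule for `α⁽ⁿ⁺¹⁾ = α⁽ⁿ⁾ (α + n)`. In generating functions the identity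
reads `-(1 - x)^(-α) log (1 - x) = ∂/∂α (1 - x)^(-α)`.
-/

open Polynomial Finset

theorem stirling1_eq_neg_one_pow_mul_stirlingFirst :
    ∀ n k : ℕ, stirling1 n k = (-1) ^ (n + k) * Nat.stirlingFirst n k
  | 0, 0 => rfl
  | 0, k + 1 => by simp [stirling1]
  | 1, 0 => rfl
  | n + 2, 0 => by
    rw [stirling1, stirling1_eq_neg_one_pow_mul_stirlingFirst (n + 1) 0]
    simp
  | n + 1, k + 1 => by
    rw [stirling1, stirling1_eq_neg_one_pow_mul_stirlingFirst n k,
      stirling1_eq_neg_one_pow_mul_stirlingFirst n (k + 1), Nat.stirlingFirst_succ_succ]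
    push_cast
    ring

theorem abs_stirling1 (n k : ℕ) : |stirling1 n k| = Nat.stirlingFirst n k := by
  simp [stirling1_eq_neg_one_pow_mul_stirlingFirst, abs_mul]

theorem fall_neg (α : ℝ) (k : ℕ) : fall (-α) k = (-1) ^ k * (ascPochhammer ℝ k).eval α := by
  rw [← neg_neg α, ascPochhammer_eval_neg_eq_descPochhammer, descPochhammer_eval_eq_prod_range,
    neg_neg, fall, ← mul_assoc, ← mul_pow]
  simp

theorem Polynomial.coeff_ascPochhammer {S : Type*} [Semiring S] (n k : ℕ) :
    (ascPochhammer S n).coeff k = Nat.stirlingFirst n k := by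
  induction n generalizing k with
  | zero => cases k <;> simp [coeff_one]
  | succ n ih =>
    rw [ascPochhammer_succ_right, mul_add]
    cases k with
    | zero => cases n <;> simp [ih]
    | succ k =>
      simp only [coeff_add, coeff_mul_X, coeff_mul_natCast, ih, Nat.stirlingFirst_succ_succ]
      push_cast
      rw [add_comm, Nat.cast_comm]

theorem Polynomial.natDegree_ascPochhammer_le {S : Type*} [Semiring S] (n : ℕ) :
    (ascPochhammer S n).natDegree ≤ n :=
  natDegree_le_iff_coeff_eq_zero.2 fun k hk => by
    rw [coeff_ascPochhammer, Nat.stirlingFirst_eq_zero_of_lt (by exact_mod_cast hk),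
      Nat.cast_zero]

theorem Polynomial.eval_derivative_ascPochhammer {R : Type*} [CommSemiring R] (n : ℕ) (x : R) :
    (derivative (ascPochhammer R n)).eval x =
      ∑ k ∈ range n, ((k : R) + 1) * Nat.stirlingFirst n (k + 1) * x ^ k := by
  have hdeg : (derivative (ascPochhammer R n)).natDegree < n + 1 :=
    calc _ ≤ (ascPochhammer R n).natDegree - 1 := natDegree_derivative_le _
      _ ≤ n - 1 := Nat.sub_le_sub_right (natDegree_ascPochhammer_le n) 1
      _ < n + 1 := by omega
  rw [eval_eq_sum_range' hdeg, sum_range_succ, coeff_derivative, coeff_ascPochhammer,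
    Nat.stirlingFirst_eq_zero_of_lt n.lt_succ_self]
  simp only [coeff_derivative, coeff_ascPochhammer, Nat.cast_zero, zero_mul, add_zero]
  exact sum_congr rfl fun k _ => by ring

theorem succ_mul_sum_range_succ_div_sub {K : Type*} [Field K] [CharZero K] (a : K) (r : ℕ → K)
    (hr : ∀ k : ℕ, ((k : K) + 1) * r (k + 1) = (a + k) * r k) (n : ℕ) :
    ((n : K) + 1) * ∑ k ∈ range (n + 1), r k / (((n + 1 : ℕ) : K) - k) =
      (a + n) * ∑ k ∈ range n, r k / ((n : K) - k) + r n := by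
  have hsub_ne_zero : ∀ {m k : ℕ}, k < m → ((m : K) - k) ≠ 0 := fun h =>
    sub_ne_zero.2 (Nat.cast_injective.ne h.ne')
  have split : ∀ k ∈ range (n + 1), ((n : K) + 1) * (r k / (((n + 1 : ℕ) : K) - k)) =
      r k + k * r k / (((n + 1 : ℕ) : K) - k) := by
    intro k hk
    have := hsub_ne_zero (mem_range.1 hk)
    field_simp
    push_cast
    ring
  have shift : ∀ k ∈ range n,
      ((k + 1 : ℕ) : K) * r (k + 1) / (((n + 1 : ℕ) : K) - (k + 1 : ℕ)) =
        (a + n) * (r k / ((n : K) - k)) - r k := by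
    intro k hk
    have := hsub_ne_zero (mem_range.1 hk)
    push_cast
    rw [hr, add_sub_add_right_eq_sub]
    field_simp
    ring
  rw [mul_sum, sum_congr rfl split, sum_add_distrib,
    sum_range_succ' (fun k : ℕ => (k : K) * r k / (((n + 1 : ℕ) : K) - k)), sum_congr rfl shift,
    sum_sub_distrib, ← mul_sum, sum_range_succ]
  simp only [Nat.cast_zero, zero_mul, zero_div, add_zero]
  ring

theorem factorial_mul_sum_eval_ascPochhammer_div_sub {K : Type*} [Field K] [CharZero K]
    (x : K) (n : ℕ) :
    (n.factorial : K) *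
        ∑ k ∈ range n, (ascPochhammer K k).eval x / k.factorial / ((n : K) - k) =
      (derivative (ascPochhammer K n)).eval x := by
  induction n with
  | zero => simp
  | succ n ih =>
    have hr : ∀ k : ℕ,
        ((k : K) + 1) * ((ascPochhammer K (k + 1)).eval x / (k + 1).factorial) =
          (x + k) * ((ascPochhammer K k).eval x / k.factorial) := fun k => by
      rw [ascPochhammer_succ_eval, Nat.factorial_succ]
      push_cast
      field_simp
    calc ((n + 1).factorial : K) * ∑ k ∈ range (n + 1),
          (ascPochhammer K k).eval x / k.factorial / (((n + 1 : ℕ) : K) - k)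
        = n.factorial * (((n : K) + 1) * ∑ k ∈ range (n + 1),
          (ascPochhammer K k).eval x / k.factorial / (((n + 1 : ℕ) : K) - k)) := by
          push_cast [Nat.factorial_succ]; ring
      _ = (x + n) * (derivative (ascPochhammer K n)).eval x + (ascPochhammer K n).eval x := by
          rw [succ_mul_sum_range_succ_div_sub x _ hr, mul_add, ← mul_assoc, mul_comm _ (x + n),
            mul_assoc, ih, mul_div_cancel₀ _ (Nat.cast_ne_zero.2 n.factorial_ne_zero)]
      _ = (derivative (ascPochhammer K (n + 1))).eval x := by
          rw [ascPochhammer_succ_right, derivative_mul]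
          simp only [derivative_add, derivative_X, derivative_natCast, eval_add, eval_mul, eval_X,
            eval_natCast, add_zero, mul_one]
          ring

theorem sum_identity_general (α : ℝ) (n : ℕ) :
    (n.factorial : ℝ) * ∑ k ∈ Finset.range n,
        (-1 : ℝ) ^ k * (fall (-α) k / k.factorial) / ((n : ℝ) - k) =
      ∑ k ∈ Finset.range n, ((k : ℝ) + 1) * (|stirling1 n (k + 1)| : ℝ) * α ^ k := by
  have hlhs : ∀ k, (-1 : ℝ) ^ k * (fall (-α) k / k.factorial) =
      (ascPochhammer ℝ k).eval α / k.factorial := fun k => by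
    rw [fall_neg, ← mul_div_assoc, ← mul_assoc, ← mul_pow]
    norm_num
  simp_rw [hlhs, factorial_mul_sum_eval_ascPochhammer_div_sub, eval_derivative_ascPochhammer,
    ← Int.cast_abs, abs_stirling1, Int.cast_natCast]

theorem sum_identity (α : ℝ) (n : ℕ) (hn : 1 ≤ n) :
    (n.factorial : ℝ) * ∑ k ∈ Finset.range n,
        (-1 : ℝ) ^ k * (fall (-α) k / k.factorial) / ((n : ℝ) - k) =
      ∑ k ∈ Finset.range n, ((k : ℝ) + 1) * (|stirling1 n (k + 1)| : ℝ) * α ^ k :=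
  sum_identity_general α n
end

section
/- Let a be a positive integer and let n be an integer with n ≥ a + 1. Then s(n,1,-a) = (-1)^{n-a-1}·a!·(n-a-1)!. -/
theorem ncStirling_zero_eq_descPochhammer_eval (n : ℕ) (α : ℝ) :
    ncStirling n 0 α = (descPochhammer ℝ n).eval (-α) := by
  induction n with
  | zero => simp [ncStirling]
  | succ n ih => rw [descPochhammer_succ_eval, ← ih, ncStirling, mul_comm]

theorem ncStirling_zero_neg_natCast (a n : ℕ) :
    ncStirling n 0 (-(a : ℝ)) = a.descFactorial n := by
  rw [ncStirling_zero_eq_descPochhammer_eval, neg_neg, descPochhammer_eval_eq_descFactorial]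

theorem ncStirling_one_neg_natCast_add (a m : ℕ) :
    ncStirling (a + 1 + m) 1 (-(a : ℝ)) = (-1) ^ m * a.factorial * m.factorial := by
  induction m with
  | zero =>
    simp [ncStirling, ncStirling_zero_neg_natCast, Nat.descFactorial_self]
  | succ m ih =>
    have h_zero : (a.descFactorial (a + 1 + m) : ℝ) = 0 := by
      rw [Nat.cast_eq_zero, Nat.descFactorial_eq_zero_iff_lt]
      omega
    rw [← add_assoc, ncStirling, ncStirling_zero_neg_natCast, h_zero, ih, Nat.factorial_succ]
    push_cast
    ring

theorem ncStirling_one_neg_int_general (a : ℕ) (n : ℕ) (hn : a + 1 ≤ n) :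
    ncStirling n 1 (-(a : ℝ)) =
      (-1 : ℝ) ^ (n - a - 1) * (a.factorial : ℝ) * ((n - a - 1).factorial : ℝ) := by
  obtain ⟨m, rfl⟩ := Nat.exists_eq_add_of_le hn
  rw [ncStirling_one_neg_natCast_add, show a + 1 + m - a - 1 = m by omega]

theorem ncStirling_one_neg_int (a : ℕ) (ha : 0 < a) (n : ℕ) (hn : a + 1 ≤ n) :
    ncStirling n 1 (-(a : ℝ)) =
      (-1 : ℝ) ^ (n - a - 1) * (a.factorial : ℝ) * ((n - a - 1).factorial : ℝ) :=
  ncStirling_one_neg_int_general a n hn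
end

section
/- Let α be a positive integer and let n be an integer with 1 ≤ n ≤ α. Then H_α - H_{α-n} = ((-1)^{n+1} / C(α,n)) · Σ_{k=0}^{n-1} (-1)^k·C(α,k)/(n-k), where C(·,·) denotes the binomial coefficient. -/
/-!
Write `S(a, n) = ∑_{k<n} (-1)^k C(a,k) / (n - k)`. Pascal's rule gives
`S(a+1, n+1) = S(a, n+1) - S(a, n)`, and the closed form `(-1)^(n+1) C(a,n) (H_a - H_{a-n})`
satisfies the same recurrence, so the identity follows by induction on `a`. The step to the
diagonal `n = a + 1` leaves the range `n ≤ a` through `S(a, a+1) = (-1)^a / (a+1)`, which holds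
because `C(a,k) / (a+1-k) = C(a+1,k) / (a+1)` and `∑_{k≤a} (-1)^k C(a+1,k) = (-1)^a`.
-/

/-- Harmonic number `H_n = 1 + 1/2 + ⋯ + 1/n`, `H_0 = 0`. -/
noncomputable def H (n : ℕ) : ℝ := ∑ k ∈ Finset.range n, (1 : ℝ) / (k + 1)

open Finset

lemma H_zero : H 0 = 0 := by simp [H]

lemma H_succ (m : ℕ) : H (m + 1) = H m + 1 / (m + 1) := by
  simp [H, sum_range_succ]

lemma choose_mul_H_sub_H_succ (a m : ℕ) (h : m < a) :
    ((a + 1).choose (m + 1) : ℝ) * (H (a + 1) - H (a - m)) =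
      a.choose (m + 1) * (H a - H (a - (m + 1))) + a.choose m * (H a - H (a - m)) := by
  obtain ⟨r, hr, hr'⟩ : ∃ r, a - m = r + 1 ∧ a - (m + 1) = r := ⟨a - (m + 1), by omega, rfl⟩
  have hdiv : ((a + 1).choose (m + 1) : ℝ) / (a + 1) = a.choose (m + 1) / (r + 1) := by
    have hmul := Nat.choose_mul_succ_eq a (m + 1)
    rw [show a + 1 - (m + 1) = r + 1 by omega] at hmul
    rw [div_eq_div_iff (by positivity) (by positivity)]
    exact_mod_cast hmul.symm
  have hpascal : ((a + 1).choose (m + 1) : ℝ) = a.choose m + a.choose (m + 1) := by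
    exact_mod_cast Nat.choose_succ_succ a m
  rw [hr, hr', H_succ, H_succ]
  linear_combination (H a - H r - 1 / (r + 1)) * hpascal + hdiv

noncomputable def altChooseSum (a n : ℕ) : ℝ :=
  ∑ k ∈ range n, (-1 : ℝ) ^ k * a.choose k / ((n : ℝ) - k)

@[simp]
lemma altChooseSum_zero_right (a : ℕ) : altChooseSum a 0 = 0 := by
  simp [altChooseSum]

lemma altChooseSum_succ_succ (a n : ℕ) :
    altChooseSum (a + 1) (n + 1) = altChooseSum a (n + 1) - altChooseSum a n := by
  have hpascal : ∀ k ∈ range n,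
      (-1 : ℝ) ^ (k + 1) * (a + 1).choose (k + 1) / (((n + 1 : ℕ) : ℝ) - (k + 1 : ℕ)) =
        (-1) ^ (k + 1) * a.choose (k + 1) / (((n + 1 : ℕ) : ℝ) - (k + 1 : ℕ)) -
          (-1) ^ k * a.choose k / ((n : ℝ) - k) := by
    intro k _
    rw [Nat.choose_succ_succ]
    push_cast
    ring
  rw [altChooseSum, altChooseSum, altChooseSum, sum_range_succ', sum_range_succ',
    sum_congr rfl hpascal, sum_sub_distrib]
  simp only [Nat.choose_zero_right]
  ring

lemma altChooseSum_succ_self (a : ℕ) : altChooseSum a (a + 1) = (-1) ^ a / (a + 1) := by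
  have hterm : ∀ k ∈ range (a + 1), (-1 : ℝ) ^ k * a.choose k / (((a + 1 : ℕ) : ℝ) - k)
      = (-1) ^ k * (a + 1).choose k / (a + 1) := by
    intro k hk
    have hk : k < a + 1 := mem_range.mp hk
    have hpos : ((a + 1 - k : ℕ) : ℝ) ≠ 0 := by exact_mod_cast (by omega : a + 1 - k ≠ 0)
    have h : (a.choose k : ℝ) * (a + 1) = (a + 1).choose k * ((a + 1 - k : ℕ) : ℝ) := by
      exact_mod_cast Nat.choose_mul_succ_eq a k
    rw [← Nat.cast_sub hk.le, div_eq_div_iff hpos (by positivity)]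
    linear_combination (-1 : ℝ) ^ k * h
  have halt : ∑ k ∈ range (a + 1), (-1 : ℝ) ^ k * (a + 1).choose k = (-1) ^ a := by
    exact_mod_cast Int.alternating_sum_range_choose_eq_choose (n := a) (m := a) |>.trans (by simp)
  rw [altChooseSum, sum_congr rfl hterm, ← sum_div, halt]

lemma altChooseSum_eq (a n : ℕ) (h : n ≤ a) :
    altChooseSum a n = (-1) ^ (n + 1) * a.choose n * (H a - H (a - n)) := by
  induction a generalizing n with
  | zero => simp [Nat.le_zero.mp h]
  | succ a ih =>
    rcases n with _ | m
    · simp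
    rw [altChooseSum_succ_succ, Nat.add_sub_add_right]
    rcases (Nat.lt_succ_iff.mp h).lt_or_eq with hm | rfl
    · rw [ih (m + 1) hm, ih m hm.le]
      linear_combination -(-1 : ℝ) ^ m * choose_mul_H_sub_H_succ a m hm
    · rw [altChooseSum_succ_self, ih m le_rfl]
      simp only [Nat.choose_self, Nat.sub_self, H_zero, H_succ]
      push_cast
      ring

theorem harmonic_diff_eq_sum_general (a n : ℕ) (h2 : n ≤ a) :
    H a - H (a - n) = ((-1 : ℝ) ^ (n + 1) / (a.choose n : ℝ)) *
      ∑ k ∈ Finset.range n, (-1 : ℝ) ^ k * (a.choose k : ℝ) / ((n : ℝ) - k) := by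
  have hC : (a.choose n : ℝ) ≠ 0 := by exact_mod_cast (Nat.choose_pos h2).ne'
  have hsign : ((-1 : ℝ) ^ (n + 1)) ^ 2 = 1 := by
    rw [← pow_mul, mul_comm, pow_mul, neg_one_sq, one_pow]
  rw [← altChooseSum, altChooseSum_eq a n h2]
  field_simp
  rw [hsign, mul_one]

theorem harmonic_diff_eq_sum (a n : ℕ) (ha : 0 < a) (h1 : 1 ≤ n) (h2 : n ≤ a) :
    H a - H (a - n) = ((-1 : ℝ) ^ (n + 1) / (a.choose n : ℝ)) *
      ∑ k ∈ Finset.range n, (-1 : ℝ) ^ k * (a.choose k : ℝ) / ((n : ℝ) - k) :=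
  harmonic_diff_eq_sum_general a n h2
end

section
/- Let α be a positive integer and let n be an integer with 1 ≤ n ≤ α. Then H_α - H_{α-n} = (Σ_{k=0}^{n-1} (k+1)·s(n,k+1)·α^k) / (Σ_{k=0}^{n} s(n,k)·α^k), where s(·,·) are the signed Stirling numbers of the first kind. -/
/-!
The numbers `s(n, k)` are the coefficients of the falling factorial
`p(x) = x (x - 1) ⋯ (x - n + 1)` (Mathlib's `descPochhammer`), so the numerator and denominator
are `p'(a)` and `p(a)`. The logarithmic derivative of `p` at `a` is `∑_{j < n} 1 / (a - j)`,
which is the sum `H_a - H_{a-n}` of the last `n` terms of `H_a`.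
-/

open Polynomial Finset

theorem descPochhammer_coeff_int (n k : ℕ) : (descPochhammer ℤ n).coeff k = stirling1 n k := by
  induction n generalizing k with
  | zero => cases k <;> simp [stirling1, coeff_one]
  | succ n ih =>
    rw [descPochhammer_succ_right, ← C_eq_natCast]
    cases k with
    | zero => simp [mul_coeff_zero, ih, stirling1, mul_comm]
    | succ k =>
      rw [coeff_mul_X_sub_C, ih, ih, stirling1, mul_comm]

theorem descPochhammer_coeff (R : Type*) [Ring R] (n k : ℕ) :
    (descPochhammer R n).coeff k = stirling1 n k := by
  rw [← descPochhammer_map (Int.castRingHom R), coeff_map, descPochhammer_coeff_int, eq_intCast]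

theorem descPochhammer_natDegree_le (R : Type*) [Ring R] (n : ℕ) :
    (descPochhammer R n).natDegree ≤ n := by
  rw [← descPochhammer_map (Int.castRingHom R)]
  exact (natDegree_map_le).trans (descPochhammer_natDegree ℤ n).le

theorem descPochhammer_eval_eq_sum_stirling1 {R : Type*} [Ring R] (n : ℕ) (x : R) :
    (descPochhammer R n).eval x = ∑ k ∈ range (n + 1), (stirling1 n k : R) * x ^ k := by
  rw [eval_eq_sum_range' (Nat.lt_succ_of_le (descPochhammer_natDegree_le R n))]
  simp only [descPochhammer_coeff]

theorem descPochhammer_derivative_eval_eq_sum_stirling1 {R : Type*} [CommRing R] (n : ℕ) (x : R) :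
    (descPochhammer R n).derivative.eval x =
      ∑ k ∈ range n, ((k : R) + 1) * (stirling1 n (k + 1) : R) * x ^ k := by
  have hdeg : (descPochhammer R n).derivative.natDegree < n + 1 :=
    (natDegree_derivative_le _).trans_lt (by have := descPochhammer_natDegree_le R n; omega)
  have htop : (stirling1 n (n + 1) : R) = 0 := by
    rw [← descPochhammer_coeff, coeff_eq_zero_of_natDegree_lt]
    exact Nat.lt_succ_of_le (descPochhammer_natDegree_le R n)
  rw [eval_eq_sum_range' hdeg, sum_range_succ]
  simp only [coeff_derivative, descPochhammer_coeff, htop, zero_mul, add_zero]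
  exact sum_congr rfl fun k _ => by ring

theorem descPochhammer_derivative_eval_eq_eval_mul_sum {K : Type*} [Field K] (n : ℕ) (x : K)
    (hx : ∀ j < n, x ≠ j) :
    (descPochhammer K n).derivative.eval x =
      (descPochhammer K n).eval x * ∑ j ∈ range n, 1 / (x - j) := by
  induction n with
  | zero => simp
  | succ n ih =>
    have hxn : x - n ≠ 0 := sub_ne_zero.mpr (hx n n.lt_succ_self)
    rw [descPochhammer_succ_right, derivative_mul, sum_range_succ]
    simp only [eval_add, eval_mul, eval_sub, eval_X, eval_natCast, derivative_sub, derivative_X,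
      derivative_natCast, sub_zero, eval_one, ih fun j hj => hx j (hj.trans n.lt_succ_self)]
    field_simp

theorem H_sub_H_sub_eq_sum {a n : ℕ} (h : n ≤ a) :
    H a - H (a - n) = ∑ j ∈ range n, 1 / ((a : ℝ) - j) := by
  obtain ⟨m, rfl⟩ := Nat.exists_eq_add_of_le' h
  rw [H, H, Nat.add_sub_cancel, sum_range_add, add_sub_cancel_left, ← sum_range_reflect]
  refine sum_congr rfl fun j hj => ?_
  have hj : j < n := mem_range.mp hj
  rw [Nat.cast_add, Nat.cast_add, Nat.cast_sub (by omega), Nat.cast_sub (by omega)]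
  push_cast
  ring_nf

theorem harmonic_diff_eq_ratio_general (a n : ℕ) (h2 : n ≤ a) :
    H a - H (a - n) =
      (∑ k ∈ Finset.range n, ((k : ℝ) + 1) * (stirling1 n (k + 1) : ℝ) * (a : ℝ) ^ k) /
        (∑ k ∈ Finset.range (n + 1), (stirling1 n k : ℝ) * (a : ℝ) ^ k) := by
  have hroots : ∀ j < n, (a : ℝ) ≠ j := fun j hj => by exact_mod_cast (hj.trans_le h2).ne'
  have hpos : 0 < (descPochhammer ℝ n).eval (a : ℝ) :=
    descPochhammer_pos (by linarith [(Nat.cast_le (α := ℝ)).mpr h2])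
  rw [H_sub_H_sub_eq_sum h2, ← descPochhammer_eval_eq_sum_stirling1,
    ← descPochhammer_derivative_eval_eq_sum_stirling1, descPochhammer_derivative_eval_eq_eval_mul_sum n _ hroots,
    mul_div_cancel_left₀ _ hpos.ne']

theorem harmonic_diff_eq_ratio (a n : ℕ) (ha : 0 < a) (h1 : 1 ≤ n) (h2 : n ≤ a) :
    H a - H (a - n) =
      (∑ k ∈ Finset.range n, ((k : ℝ) + 1) * (stirling1 n (k + 1) : ℝ) * (a : ℝ) ^ k) /
        (∑ k ∈ Finset.range (n + 1), (stirling1 n k : ℝ) * (a : ℝ) ^ k) :=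
  harmonic_diff_eq_ratio_general a n h2
end

section
/- For every positive integer n, H_n = (-1)^{n+1} · Σ_{k=0}^{n-1} (-1)^k·C(n,k)/(n-k), where C(n,k) is the binomial coefficient. -/
/-!
Reflecting `k ↦ n - 1 - k` turns the right-hand side into `∑_{k<n} (-1)^k C(n, k+1) / (k+1)`.
By Pascal's rule and the absorption identity `C(n, k) / (k+1) = C(n+1, k+1) / (n+1)`, this sum
grows from `n` to `n + 1` by `(n+1)⁻¹ ∑_{k≤n} (-1)^k C(n+1, k+1) = (n+1)⁻¹`, just as `H_n` does.
-/

open Finset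

theorem sum_range_neg_one_pow_mul_choose_succ (n : ℕ) :
    ∑ k ∈ range (n + 1), (-1 : ℤ) ^ k * (n + 1).choose (k + 1) = 1 := by
  have h := Int.alternating_sum_range_choose_of_ne n.succ_ne_zero
  rw [sum_range_succ'] at h
  simp only [pow_succ, mul_neg_one, neg_mul, sum_neg_distrib] at h
  simpa [neg_add_eq_zero] using h

theorem Nat.cast_choose_div_add_one {K : Type*} [Field K] [CharZero K] (n k : ℕ) :
    (n.choose k : K) / (k + 1) = (n + 1).choose (k + 1) / (n + 1) := by
  rw [div_eq_div_iff k.cast_add_one_ne_zero n.cast_add_one_ne_zero]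
  exact_mod_cast (mul_comm _ _).trans (n.add_one_mul_choose_eq k)

theorem harmonic_eq_sum_neg_one_pow_mul_choose_div (n : ℕ) :
    harmonic n = ∑ k ∈ range n, (-1) ^ k * (n.choose (k + 1) : ℚ) / (k + 1) := by
  induction n with
  | zero => simp
  | succ n ih =>
    have pascal : ∀ k ∈ range (n + 1),
        (-1) ^ k * ((n + 1).choose (k + 1) : ℚ) / (k + 1) =
          (-1) ^ k * ((n + 1).choose (k + 1) : ℚ) / (n + 1) +
            (-1) ^ k * (n.choose (k + 1) : ℚ) / (k + 1) := fun k _ => calc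
      _ = (-1) ^ k * ((n.choose k : ℚ) / (k + 1)) +
            (-1) ^ k * (n.choose (k + 1) : ℚ) / (k + 1) := by
        rw [Nat.choose_succ_succ', Nat.cast_add]; ring
      _ = _ := by rw [Nat.cast_choose_div_add_one]; ring
    have alternating :
        ∑ k ∈ range (n + 1), (-1) ^ k * ((n + 1).choose (k + 1) : ℚ) / (n + 1) =
          (↑(n + 1))⁻¹ := by
      have h := congrArg (Int.cast : ℤ → ℚ) (sum_range_neg_one_pow_mul_choose_succ n)
      push_cast at h
      rw [← sum_div, h, one_div, Nat.cast_add_one]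
    rw [sum_congr rfl pascal, sum_add_distrib, alternating, sum_range_succ _ n,
      Nat.choose_succ_self, ← ih, harmonic_succ]
    simp [add_comm]

theorem neg_one_pow_mul_sum_choose_div_sub {K : Type*} [Field K] (n : ℕ) :
    (-1 : K) ^ (n + 1) * ∑ k ∈ range n, (-1) ^ k * (n.choose k : K) / (n - k) =
      ∑ k ∈ range n, (-1) ^ k * (n.choose (k + 1) : K) / (k + 1) := by
  rw [mul_sum, ← sum_range_reflect]
  refine sum_congr rfl fun k hk => ?_
  obtain ⟨m, rfl⟩ : ∃ m, n = k + 1 + m := ⟨n - (k + 1), by grind⟩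
  have sign : (-1 : K) ^ (k + 1 + m + 1) * (-1) ^ m = (-1) ^ k := by
    rw [← pow_add, show k + 1 + m + 1 + m = k + 2 * (m + 1) by ring, pow_add, pow_mul]
    simp
  rw [show k + 1 + m - 1 - k = m by omega, Nat.choose_symm_add]
  push_cast
  rw [← sign]
  ring

theorem harmonic_eq_alternating_sum_general (n : ℕ) :
    H n = (-1 : ℝ) ^ (n + 1) *
      ∑ k ∈ Finset.range n, (-1 : ℝ) ^ k * (n.choose k : ℝ) / ((n : ℝ) - k) := by
  rw [neg_one_pow_mul_sum_choose_div_sub]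
  have h := congrArg (Rat.cast : ℚ → ℝ) (harmonic_eq_sum_neg_one_pow_mul_choose_div n)
  push_cast [harmonic] at h
  simpa [H] using h

theorem harmonic_eq_alternating_sum (n : ℕ) (hn : 0 < n) :
    H n = (-1 : ℝ) ^ (n + 1) *
      ∑ k ∈ Finset.range n, (-1 : ℝ) ^ k * (n.choose k : ℝ) / ((n : ℝ) - k) :=
  harmonic_eq_alternating_sum_general n
end
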